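/- The ultimately periodic binary word w = 0110(1001)(1001)(1001)⋯ = 0110(1001)^∞ has the same abelian complexity as the Thue-Morse word: ρ^ab_w(n) = 2 for all odd n and ρ^ab_w(n) = 3 for all even n ≥ 2. -/

import Mathlib

/-!
A binary word of length `n` is determined up to abelian equivalence by its number of ones, and
the number of ones of `w[i, i + n)` is the difference of those of the prefixes of lengths `i + n`
and `i`. The prefixes of `w` are as balanced as possible: twice the number of ones of the prefix
of length `m` is `m` for even `m` and `m ± 1` for odd `m`, with an explicit sign (`wBalance`).
Hence twice the number of ones of a factor of length `n` is `n ± 1` for odd `n`, and `n` or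
`n ± 2` for even `n`, and starting positions `i ≤ 7` realise every one of these values. For
`n ≡ 0 (mod 4)` the values `n ± 2` are reached only from `i = 1` and `i = 3`, inside the
non-periodic prefix `0110`.
-/

/-- The factor of the infinite word `ω` of length `n` starting at position `i`. -/
def factor {A : Type*} (ω : ℕ → A) (i n : ℕ) : List A :=
  (List.range n).map fun j => ω (i + j)

/-- The abelian complexity of `ω`: the number of abelian equivalence classes of
factors of `ω` of length `n`. -/
noncomputable def abelianComplexity {A : Type*} [DecidableEq A] (ω : ℕ → A) (n : ℕ) : ℕ :=
  Set.ncard {c : A → ℕ | ∃ i : ℕ, c = fun a => (factor ω i n).count a}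

/-- The ultimately periodic word `0110(1001)^∞`. -/
def w : ℕ → Fin 2 := fun n =>
  if n < 4 then (if n = 0 ∨ n = 3 then 0 else 1)
  else (if n % 4 = 0 ∨ n % 4 = 3 then 1 else 0)

section Factor

variable {A : Type*} (ω : ℕ → A)

theorem length_factor (i n : ℕ) : (factor ω i n).length = n := by
  simp [factor]

theorem factor_one (i : ℕ) : factor ω i 1 = [ω i] := by
  simp [factor]

theorem factor_add (i m n : ℕ) :
    factor ω i (m + n) = factor ω i m ++ factor ω (i + m) n := by
  simp [factor, List.range_add, Function.comp_def, add_assoc]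

theorem count_factor_zero_add [DecidableEq A] (a : A) (i n : ℕ) :
    (factor ω 0 (i + n)).count a = (factor ω 0 i).count a + (factor ω i n).count a := by
  rw [factor_add, List.count_append, zero_add]

end Factor

theorem List.count_zero_add_count_one (l : List (Fin 2)) :
    l.count 0 + l.count 1 = l.length := by
  simpa [Fin.sum_univ_two] using
    Multiset.sum_count_eq_card (s := Finset.univ) (m := (l : Multiset (Fin 2))) (by simp)

def factorWeights (ω : ℕ → Fin 2) (n : ℕ) : Set ℕ :=
  Set.range fun i => (factor ω i n).count 1

theorem abelianComplexity_eq_ncard_factorWeights (ω : ℕ → Fin 2) (n : ℕ) :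
    abelianComplexity ω n = (factorWeights ω n).ncard := by
  have parikh : ∀ i, (fun a => (factor ω i n).count a) =
      fun a : Fin 2 => if a = 1 then (factor ω i n).count 1 else n - (factor ω i n).count 1 := by
    intro i
    have := (factor ω i n).count_zero_add_count_one
    rw [length_factor] at this
    funext a
    fin_cases a <;> simp; omega
  have : {c : Fin 2 → ℕ | ∃ i, c = fun a => (factor ω i n).count a} =
      (fun k a => if a = 1 then k else n - k) '' factorWeights ω n := by
    ext c
    simp only [parikh, factorWeights, Set.mem_ofPred_eq, Set.mem_image, Set.exists_range_iff]
    exact exists_congr fun i => eq_comm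
  rw [abelianComplexity, this, Set.ncard_image_of_injective]
  intro k l h
  simpa using congrFun h 1

def wBalance (m : ℕ) : ℤ :=
  if m % 2 = 0 then 0
  else if m < 4 then (if m = 1 then -1 else 1)
  else if m % 4 = 1 then 1 else -1

theorem two_mul_count_one_prefix_w (m : ℕ) :
    2 * ((factor w 0 m).count 1 : ℤ) = m + wBalance m := by
  induction m with
  | zero => simp [factor, wBalance]
  | succ m ih =>
    rw [count_factor_zero_add, factor_one, List.count_singleton]
    push_cast
    unfold wBalance w at *
    split_ifs at * <;> simp_all <;> omega

theorem two_mul_count_one_factor_w (i n : ℕ) :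
    2 * ((factor w i n).count 1 : ℤ) = n + wBalance (i + n) - wBalance i := by
  have h := two_mul_count_one_prefix_w (i + n)
  rw [count_factor_zero_add] at h
  push_cast at h
  linarith [two_mul_count_one_prefix_w i]

theorem mem_factorWeights_w_iff (n k : ℕ) :
    k ∈ factorWeights w n ↔ ∃ i, 2 * (k : ℤ) = n + wBalance (i + n) - wBalance i := by
  simp only [factorWeights, Set.mem_range, ← two_mul_count_one_factor_w]
  exact exists_congr fun i => by omega

theorem factorWeights_w_of_odd {n : ℕ} (hn : Odd n) :
    factorWeights w n = {(n - 1) / 2, (n + 1) / 2} := by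
  rw [Nat.odd_iff] at hn
  ext k
  simp only [mem_factorWeights_w_iff, Set.mem_insert_iff, Set.mem_singleton_iff]
  constructor
  · rintro ⟨i, hi⟩
    grind [wBalance]
  · rintro (rfl | rfl)
    · exact ⟨if n % 4 = 3 then 4 else 6, by grind [wBalance]⟩
    · exact ⟨if n % 4 = 1 then 4 else 6, by grind [wBalance]⟩

theorem factorWeights_w_of_even {n : ℕ} (hn : Even n) (h2 : 2 ≤ n) :
    factorWeights w n = {n / 2 - 1, n / 2, n / 2 + 1} := by
  rw [Nat.even_iff] at hn
  ext k
  simp only [mem_factorWeights_w_iff, Set.mem_insert_iff, Set.mem_singleton_iff]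
  constructor
  · rintro ⟨i, hi⟩
    grind [wBalance]
  · rintro (rfl | rfl | rfl)
    · exact ⟨if n % 4 = 0 then 3 else 5, by grind [wBalance]⟩
    · exact ⟨4, by grind [wBalance]⟩
    · exact ⟨if n % 4 = 0 then 1 else 7, by grind [wBalance]⟩

/-- The ultimately periodic word `0110(1001)^∞` has the same abelian complexity
as the Thue-Morse word: `2` at odd lengths and `3` at even lengths `≥ 2`. -/
theorem abelianComplexity_of_w :
    (∀ n : ℕ, Odd n → abelianComplexity w n = 2) ∧
    (∀ n : ℕ, Even n → 2 ≤ n → abelianComplexity w n = 3) := by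
  refine ⟨fun n hn => ?_, fun n hn h2 => ?_⟩
  · have hmod := Nat.odd_iff.mp hn
    rw [abelianComplexity_eq_ncard_factorWeights, factorWeights_w_of_odd hn,
      Set.ncard_pair (by omega)]
  · have hmod := Nat.even_iff.mp hn
    rw [abelianComplexity_eq_ncard_factorWeights, factorWeights_w_of_even hn h2,
      Set.ncard_insert_of_notMem (by simp only [Set.mem_insert_iff, Set.mem_singleton_iff]; omega),
      Set.ncard_pair (by omega)]
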